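/- Let d ≥ 2 and let μ(v) = (2π)^{-d/2} e^{−|v|²/2}. For f in the Schwartz space S(ℝ^d), define L_{2,L} f = −μ^{-1/2} Q_L(μ^{1/2} f, μ), where Q_L(g,h)(v) = ∇_v · (∫_{ℝ^d} a(v−v_*)(g(v_*)(∇h)(v) − (∇g)(v_*) h(v)) dv_*) with a(v) = |v|² Id − v⊗v. Then, with Ψ₀ = μ^{1/2}, Φ_j(v) = v_j Ψ₀(v), Φ_{ij}(v) = v_i v_j Ψ₀(v) for i ≠ j, and Θ_j(v) = 2^{-1/2}(v_j² − 1)Ψ₀(v), one has L_{2,L} f = −2(d−1) Σ_{j=1}^d ⟨f, Φ_j⟩_{L²} Φ_j + Σ_{i≠j} ⟨f, Φ_{ij}⟩_{L²} Φ_{ij} − 2 Σ_{i≠j} ⟨f, Θ_i⟩_{L²} Θ_j. -/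

import Mathlib

open MeasureTheory Real

/-- Partial derivative `∂_j g` of a real-valued function on `ℝ^d`. -/
noncomputable def pd (d : ℕ) (j : Fin d) (g : (Fin d → ℝ) → ℝ) :
    (Fin d → ℝ) → ℝ :=
  fun v => fderiv ℝ g v (Pi.single j 1)

/-- The entries `a_{ij}(v) = |v|²δ_{ij} − v_i v_j` of the matrix
`a(v) = |v|² Id − v⊗v`. -/
noncomputable def aMat (d : ℕ) (i j : Fin d) (w : Fin d → ℝ) : ℝ :=
  (if i = j then ∑ k : Fin d, (w k) ^ 2 else 0) - w i * w j

/-- The Landau collision operator with Maxwellian molecules: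
`Q_L(g,h)(v) = ∇_v · (∫ a(v−v_*)(g(v_*)(∇h)(v) − (∇g)(v_*)h(v)) dv_*)`. -/
noncomputable def QL (d : ℕ) (g h : (Fin d → ℝ) → ℝ) : (Fin d → ℝ) → ℝ :=
  fun v => ∑ i : Fin d,
    pd d i (fun u => ∑ j : Fin d,
      ∫ w : Fin d → ℝ, aMat d i j (u - w) * (g w * pd d j h u - pd d j g w * h u)) v

/-- The Maxwellian equilibrium distribution `μ`. -/
noncomputable def maxw (d : ℕ) (v : Fin d → ℝ) : ℝ :=
  (2 * Real.pi) ^ (-(d : ℝ) / 2) * Real.exp (-(∑ k : Fin d, (v k) ^ 2) / 2)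

/-- The square root `Ψ₀ = μ^{1/2}` of the Maxwellian distribution. -/
noncomputable def Psi0 (d : ℕ) (v : Fin d → ℝ) : ℝ :=
  (2 * Real.pi) ^ (-(d : ℝ) / 4) * Real.exp (-(∑ k : Fin d, (v k) ^ 2) / 4)

/-- The degree-1 Hermite functions `Φ_j = v_j Ψ₀`. -/
noncomputable def PhiH (d : ℕ) (j : Fin d) (v : Fin d → ℝ) : ℝ := v j * Psi0 d v

/-- The degree-2 Hermite functions `Φ_{ij} = v_i v_j Ψ₀` (`i ≠ j`). -/
noncomputable def PhiH2 (d : ℕ) (i j : Fin d) (v : Fin d → ℝ) : ℝ :=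
  v i * v j * Psi0 d v

/-- The degree-2 Hermite functions `Θ_j = 2^{-1/2}(v_j² − 1)Ψ₀`. -/
noncomputable def ThetaH (d : ℕ) (j : Fin d) (v : Fin d → ℝ) : ℝ :=
  ((v j) ^ 2 - 1) / Real.sqrt 2 * Psi0 d v

/-!
For Maxwellian molecules `a(u - w)` is a quadratic polynomial in `w`, so
`∫ a(u - w) g(w) dw` only sees the moments of `g` of order at most two. After one
integration by parts in the `∇g` term the same holds for the whole flux: its `i`-th
component is `μ(u)` times a cubic polynomial in `u` built from these moments (`fluxPoly`).
Taking the divergence with `∇μ = -u μ` gives `Q_L(g, μ) = μ · P` for a quadratic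
polynomial `P` (`landauPoly`). For `g = Ψ₀ f` the moments are the inner products of `f`
with `Ψ₀`, `Φ_j`, `Φ_{ij}` and `Θ_j`, and since `μ = Ψ₀²`, rewriting `P` in this Hermite
basis is the claimed expansion.
-/

open scoped SchwartzMap LineDeriv

section IntegrableAgainstTemperate

variable {E : Type*} [NormedAddCommGroup E] [NormedSpace ℝ E] [MeasurableSpace E]
  {μ : Measure E} {g : E → ℝ}

def IntegrableAgainstTemperate (g : E → ℝ) (μ : Measure E) : Prop :=
  ∀ φ : E → ℝ, φ.HasTemperateGrowth → Integrable (fun x => φ x * g x) μ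

namespace IntegrableAgainstTemperate

theorem integrable (hg : IntegrableAgainstTemperate g μ) : Integrable g μ := by
  simpa using hg (fun _ => 1) (by fun_prop)

theorem bdd_mul (hg : IntegrableAgainstTemperate g μ) {ψ : E → ℝ} {C : ℝ}
    (hψ : AEStronglyMeasurable ψ μ) (hψC : ∀ x, ‖ψ x‖ ≤ C) :
    IntegrableAgainstTemperate (fun x => ψ x * g x) μ := fun φ hφ => by
  simpa only [mul_left_comm] using (hg φ hφ).bdd_mul hψ (ae_of_all _ hψC)

theorem temperate_mul (hg : IntegrableAgainstTemperate g μ) {φ : E → ℝ}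
    (hφ : φ.HasTemperateGrowth) : IntegrableAgainstTemperate (fun x => φ x * g x) μ :=
  fun ψ hψ => by simpa only [Pi.mul_apply, mul_assoc] using hg _ (hψ.mul hφ)

theorem add (hg : IntegrableAgainstTemperate g μ) {h : E → ℝ}
    (hh : IntegrableAgainstTemperate h μ) :
    IntegrableAgainstTemperate (fun x => g x + h x) μ := fun φ hφ => by
  simpa only [mul_add] using (hg φ hφ).fun_add (hh φ hφ)

theorem integral_mul_fderiv_eq_neg [FiniteDimensional ℝ E] [BorelSpace E]
    [μ.IsAddHaarMeasure] (hg : IntegrableAgainstTemperate g μ) {m : E}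
    (hg' : IntegrableAgainstTemperate (fun x => fderiv ℝ g x m) μ) (hgd : Differentiable ℝ g)
    {φ : E → ℝ} (hφ : φ.HasTemperateGrowth)
    (hφ' : (fun x => fderiv ℝ φ x m).HasTemperateGrowth) :
    ∫ x, φ x * fderiv ℝ g x m ∂μ = -∫ x, fderiv ℝ φ x m * g x ∂μ :=
  integral_mul_fderiv_eq_neg_fderiv_mul_of_integrable (hg _ hφ') (hg' _ hφ) (hg _ hφ)
    (fun x _ => (hφ.1.differentiable (by simp)).differentiableAt) (fun x _ => hgd x)

end IntegrableAgainstTemperate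

theorem SchwartzMap.integrableAgainstTemperate [BorelSpace E] [SecondCountableTopology E]
    [μ.HasTemperateGrowth] (F : 𝓢(E, ℝ)) : IntegrableAgainstTemperate F μ := fun φ hφ => by
  simpa [SchwartzMap.smulLeftCLM_apply hφ] using
    (SchwartzMap.smulLeftCLM ℝ φ F).integrable (μ := μ)

end IntegrableAgainstTemperate

theorem fderiv_coord {ι : Type*} [Fintype ι] (k : ι) (w : ι → ℝ) :
    fderiv ℝ (fun y : ι → ℝ => y k) w = ContinuousLinearMap.proj k :=
  (hasFDerivAt_apply k w).fderiv

@[fun_prop]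
theorem hasTemperateGrowth_coord {ι : Type*} [Fintype ι] (k : ι) :
    (fun w : ι → ℝ => w k).HasTemperateGrowth :=
  (ContinuousLinearMap.proj (R := ℝ) (φ := fun _ : ι => ℝ) k).hasTemperateGrowth

section Gaussian

theorem pd_gaussian (d : ℕ) (j : Fin d) (c a : ℝ) (u : Fin d → ℝ) :
    pd d j (fun u => c * Real.exp (-(∑ k, u k ^ 2) / a)) u
      = -(2 * u j / a) * (c * Real.exp (-(∑ k, u k ^ 2) / a)) := by
  simp only [div_eq_mul_inv, pd]
  simp (disch := fun_prop) only [neg_mul, fderiv_fun_mul, fderiv_exp, fderiv_fun_neg,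
    fderiv_fun_const, Pi.zero_apply, smul_zero, fderiv_fun_sum, fderiv_fun_pow,
    Nat.add_one_sub_one, pow_one, nsmul_eq_mul, Nat.cast_ofNat, fderiv_coord, zero_add, smul_neg,
    add_zero, neg_apply, smul_apply, sum_apply, ContinuousLinearMap.proj_apply, Pi.single_apply,
    smul_eq_mul, mul_ite, mul_one, mul_zero, Finset.sum_ite_eq', Finset.mem_univ, ↓reduceIte,
    neg_inj]
  ring

theorem pd_maxw (d : ℕ) (j : Fin d) (u : Fin d → ℝ) :
    pd d j (maxw d) u = -u j * maxw d u := by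
  rw [show maxw d = fun u => (2 * π) ^ (-(d : ℝ) / 2) * exp (-(∑ k, u k ^ 2) / 2) from rfl,
    pd_gaussian]
  ring

theorem pd_Psi0 (d : ℕ) (j : Fin d) (u : Fin d → ℝ) :
    pd d j (Psi0 d) u = -(u j / 2) * Psi0 d u := by
  rw [show Psi0 d = fun u => (2 * π) ^ (-(d : ℝ) / 4) * exp (-(∑ k, u k ^ 2) / 4) from rfl,
    pd_gaussian]
  ring

theorem differentiable_Psi0 (d : ℕ) : Differentiable ℝ (Psi0 d) := by
  unfold Psi0; fun_prop

theorem maxw_eq_Psi0_mul_self (d : ℕ) (v : Fin d → ℝ) : maxw d v = Psi0 d v * Psi0 d v := by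
  rw [maxw, Psi0, mul_mul_mul_comm, ← Real.exp_add, ← Real.rpow_add (by positivity)]
  ring_nf

theorem Psi0_pos (d : ℕ) (v : Fin d → ℝ) : 0 < Psi0 d v := by
  unfold Psi0; positivity

theorem Psi0_le (d : ℕ) (v : Fin d → ℝ) : Psi0 d v ≤ (2 * π) ^ (-(d : ℝ) / 4) := by
  refine mul_le_of_le_one_right (by positivity) (Real.exp_le_one_iff.2 ?_)
  have : 0 ≤ ∑ k, v k ^ 2 := by positivity
  linarith

end Gaussian

section Landau

variable {d : ℕ}

theorem hasTemperateGrowth_aMat_sub (i j : Fin d) (u : Fin d → ℝ) :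
    (fun w => aMat d i j (u - w)).HasTemperateGrowth := by
  unfold aMat
  split_ifs <;> simp only [Pi.sub_apply] <;> fun_prop

theorem fderiv_aMat_sub (i j : Fin d) (u w : Fin d → ℝ) :
    fderiv ℝ (fun w => aMat d i j (u - w)) w (Pi.single j 1)
      = if i = j then 0 else u i - w i := by
  unfold aMat
  split_ifs with h
  · subst h
    simp (disch := fun_prop) only [Pi.sub_apply, fderiv_fun_sub, fderiv_fun_sum, fderiv_fun_pow,
      Nat.add_one_sub_one, pow_one, nsmul_eq_mul, Nat.cast_ofNat, fderiv_fun_const, Pi.zero_apply,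
      fderiv_coord, zero_sub, smul_neg, Finset.sum_neg_distrib, fderiv_fun_mul, sub_apply,
      neg_apply, sum_apply, smul_apply, ContinuousLinearMap.proj_apply, Pi.single_apply,
      smul_eq_mul, mul_ite, mul_one, mul_zero, Finset.sum_ite_eq', Finset.mem_univ, ↓reduceIte,
      add_apply, neg_sub]
    ring
  · simp (disch := fun_prop) [fderiv_fun_sub, fderiv_fun_mul, fderiv_coord, Pi.single_apply, h]

noncomputable def moment0 (g : (Fin d → ℝ) → ℝ) : ℝ := ∫ w, g w

noncomputable def moment1 (g : (Fin d → ℝ) → ℝ) (k : Fin d) : ℝ := ∫ w, w k * g w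

noncomputable def moment2 (g : (Fin d → ℝ) → ℝ) (k l : Fin d) : ℝ :=
  ∫ w, w k * w l * g w

noncomputable def aMatConv (g : (Fin d → ℝ) → ℝ) (i j : Fin d) (u : Fin d → ℝ) : ℝ :=
  (if i = j then ∑ k, (u k ^ 2 * moment0 g - 2 * u k * moment1 g k + moment2 g k k) else 0)
    - (u i * u j * moment0 g - u i * moment1 g j - u j * moment1 g i + moment2 g i j)

variable {g : (Fin d → ℝ) → ℝ}

theorem integral_aMat_sub_mul (hg : IntegrableAgainstTemperate g volume) (i j : Fin d)
    (u : Fin d → ℝ) : ∫ w, aMat d i j (u - w) * g w = aMatConv g i j u := by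
  have h0 : Integrable g := hg.integrable
  have h1 (k : Fin d) : Integrable (fun w : Fin d → ℝ => w k * g w) := hg _ (by fun_prop)
  have h2 (k l : Fin d) : Integrable (fun w : Fin d → ℝ => w k * w l * g w) :=
    hg _ (by fun_prop)
  have expand (w : Fin d → ℝ) : aMat d i j (u - w) * g w
      = (if i = j then ∑ k, (u k ^ 2 * g w - 2 * u k * (w k * g w) + w k * w k * g w) else 0)
        - (u i * u j * g w - u i * (w j * g w) - u j * (w i * g w) + w i * w j * g w) := by
    unfold aMat
    split_ifs
    · simp only [Pi.sub_apply, sub_mul, Finset.sum_mul]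
      congr 1
      · exact Finset.sum_congr rfl fun k _ => by ring
      · ring
    · simp only [Pi.sub_apply]; ring
  simp_rw [expand]
  split_ifs <;>
  simp (disch := fun_prop) only [integral_sub, integral_add, integral_finsetSum,
    integral_const_mul, integral_zero, aMatConv, moment0, moment1, moment2, ↓reduceIte, *]

theorem integral_aMat_sub_mul_pd (hg : IntegrableAgainstTemperate g volume) {j : Fin d}
    (hg' : IntegrableAgainstTemperate (pd d j g) volume) (hgd : Differentiable ℝ g)
    (i : Fin d) (u : Fin d → ℝ) :
    ∫ w, aMat d i j (u - w) * pd d j g w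
      = -(if i = j then 0 else u i * moment0 g - moment1 g i) := by
  have hφ' :
      (fun w => fderiv ℝ (fun w => aMat d i j (u - w)) w (Pi.single j 1)).HasTemperateGrowth := by
    simp_rw [fderiv_aMat_sub]
    split_ifs <;> fun_prop
  unfold pd
  rw [hg.integral_mul_fderiv_eq_neg hg' hgd (hasTemperateGrowth_aMat_sub i j u) hφ']
  simp_rw [fderiv_aMat_sub]
  split_ifs
  · simp
  · simp only [sub_mul]
    rw [integral_sub (hg.integrable.const_mul _) (hg _ (by fun_prop)), integral_const_mul,
      moment0, moment1]

noncomputable def fluxPoly (g : (Fin d → ℝ) → ℝ) (i : Fin d) (u : Fin d → ℝ) : ℝ :=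
  ((d : ℝ) - 1) * (u i * moment0 g - moment1 g i) - u i * ∑ k, moment2 g k k
    + u i * ∑ k, u k * moment1 g k - (∑ k, u k ^ 2) * moment1 g i + ∑ k, u k * moment2 g i k

theorem sum_mul_aMatConv (i : Fin d) (u : Fin d → ℝ) :
    ∑ j, u j * aMatConv g i j u
      = u i * ∑ k, moment2 g k k - u i * ∑ k, u k * moment1 g k
        + (∑ k, u k ^ 2) * moment1 g i - ∑ k, u k * moment2 g i k := by
  have hite : ∑ j, u j * aMatConv g i j u
      = ∑ k, (u i * (u k ^ 2 * moment0 g - 2 * u k * moment1 g k + moment2 g k k)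
          - u k * (u i * u k * moment0 g - u i * moment1 g k - u k * moment1 g i
            + moment2 g i k)) := by
    simp only [aMatConv, mul_sub, Finset.sum_sub_distrib, mul_ite, mul_zero, Finset.sum_ite_eq,
      Finset.mem_univ, ↓reduceIte, Finset.mul_sum]
  rw [hite]
  simp only [Finset.mul_sum, Finset.sum_mul, ← Finset.sum_sub_distrib, ← Finset.sum_add_distrib]
  exact Finset.sum_congr rfl fun k _ => by ring

theorem sum_ite_eq_zero_else_const (i : Fin d) (x : ℝ) :
    ∑ j : Fin d, (if i = j then 0 else x) = ((d : ℝ) - 1) * x := by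
  have hd : 1 ≤ d := i.pos
  simp [Finset.sum_ite, Finset.filter_ne, Finset.card_erase_of_mem, Nat.cast_sub hd]

theorem sum_integral_aMat_sub_mul_eq_maxw_mul_fluxPoly (hg : IntegrableAgainstTemperate g volume)
    (hg' : ∀ j, IntegrableAgainstTemperate (pd d j g) volume) (hgd : Differentiable ℝ g)
    (i : Fin d) (u : Fin d → ℝ) :
    ∑ j, ∫ w, aMat d i j (u - w) * (g w * pd d j (maxw d) u - pd d j g w * maxw d u)
      = maxw d u * fluxPoly g i u := by
  have term (j : Fin d) :
      ∫ w, aMat d i j (u - w) * (g w * pd d j (maxw d) u - pd d j g w * maxw d u)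
        = maxw d u * (-(u j * aMatConv g i j u)
            + (if i = j then 0 else u i * moment0 g - moment1 g i)) := by
    have hsplit (w : Fin d → ℝ) :
        aMat d i j (u - w) * (g w * pd d j (maxw d) u - pd d j g w * maxw d u)
          = (-u j * maxw d u) * (aMat d i j (u - w) * g w)
            - maxw d u * (aMat d i j (u - w) * pd d j g w) := by
      rw [pd_maxw]; ring
    have ha := hasTemperateGrowth_aMat_sub i j u
    simp_rw [hsplit]
    rw [integral_sub ((hg _ ha).const_mul _) ((hg' j _ ha).const_mul _), integral_const_mul,
      integral_const_mul, integral_aMat_sub_mul hg, integral_aMat_sub_mul_pd hg (hg' j) hgd]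
    ring
  simp_rw [term, ← Finset.mul_sum, Finset.sum_add_distrib, Finset.sum_neg_distrib,
    sum_mul_aMatConv, sum_ite_eq_zero_else_const, fluxPoly]
  ring

theorem pd_mul {F G : (Fin d → ℝ) → ℝ} {v : Fin d → ℝ} (hF : DifferentiableAt ℝ F v)
    (hG : DifferentiableAt ℝ G v) (j : Fin d) :
    pd d j (fun u => F u * G u) v = pd d j F v * G v + F v * pd d j G v := by
  simp only [pd, fderiv_fun_mul hF hG, add_apply, smul_apply, smul_eq_mul]
  ring

theorem pd_fluxPoly (i : Fin d) (v : Fin d → ℝ) :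
    pd d i (fluxPoly g i) v = ((d : ℝ) - 1) * moment0 g - ∑ k, moment2 g k k
      + ∑ k, v k * moment1 g k - v i * moment1 g i + moment2 g i i := by
  unfold pd fluxPoly
  simp (disch := fun_prop) only [fderiv_fun_add, fderiv_fun_sub, fderiv_fun_mul, fderiv_fun_const,
    Pi.zero_apply, smul_zero, fderiv_coord, zero_add, sub_zero, sub_self, add_zero, fderiv_fun_sum,
    Finset.sum_const_zero, fderiv_fun_pow, Nat.add_one_sub_one, pow_one, nsmul_eq_mul,
    Nat.cast_ofNat, add_apply, sub_apply, smul_apply, ContinuousLinearMap.proj_apply,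
    Pi.single_eq_same, smul_eq_mul, mul_one, sum_apply, Pi.single_apply, mul_ite, mul_zero,
    Finset.sum_ite_eq', Finset.mem_univ, ↓reduceIte, add_left_inj]
  ring

noncomputable def landauPoly (g : (Fin d → ℝ) → ℝ) (v : Fin d → ℝ) : ℝ :=
  ((d : ℝ) - 1) * ((d : ℝ) - ∑ k, v k ^ 2) * moment0 g
    + 2 * ((d : ℝ) - 1) * ∑ k, v k * moment1 g k
    + (∑ k, v k ^ 2 - ((d : ℝ) - 1)) * ∑ k, moment2 g k k
    - ∑ i, v i * ∑ k, v k * moment2 g i k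

theorem sum_pd_fluxPoly_sub (v : Fin d → ℝ) :
    ∑ i, (pd d i (fluxPoly g i) v - v i * fluxPoly g i v) = landauPoly g v := by
  set A := ∑ k, v k ^ 2
  set B := ∑ k, v k * moment1 g k
  set T := ∑ k, moment2 g k k
  have hdiv :
      ∑ i, pd d i (fluxPoly g i) v = d * (((d : ℝ) - 1) * moment0 g - T + B) - B + T := by
    simp only [pd_fluxPoly, Finset.sum_add_distrib, Finset.sum_sub_distrib, Finset.sum_const,
      Finset.card_univ, Fintype.card_fin, nsmul_eq_mul]
    ring
  have hmul (i : Fin d) : v i * fluxPoly g i v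
      = (((d : ℝ) - 1) * moment0 g - T + B) * v i ^ 2 - ((d : ℝ) - 1 + A) * (v i * moment1 g i)
        + v i * ∑ k, v k * moment2 g i k := by
    unfold fluxPoly; ring
  have hsum : ∑ i, v i * fluxPoly g i v
      = (((d : ℝ) - 1) * moment0 g - T + B) * A - ((d : ℝ) - 1 + A) * B
        + ∑ i, v i * ∑ k, v k * moment2 g i k := by
    simp only [hmul, Finset.sum_add_distrib, Finset.sum_sub_distrib, ← Finset.mul_sum, A, B]
  rw [Finset.sum_sub_distrib, hdiv, hsum, landauPoly]
  ring

theorem QL_maxw (hg : IntegrableAgainstTemperate g volume)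
    (hg' : ∀ j, IntegrableAgainstTemperate (pd d j g) volume) (hgd : Differentiable ℝ g)
    (v : Fin d → ℝ) : QL d g (maxw d) v = maxw d v * landauPoly g v := by
  have hmaxw : Differentiable ℝ (maxw d) := by unfold maxw; fun_prop
  have hflux (i : Fin d) : Differentiable ℝ (fluxPoly g i) := by unfold fluxPoly; fun_prop
  have hpd (i : Fin d) : pd d i (fun u => maxw d u * fluxPoly g i u) v
      = maxw d v * (pd d i (fluxPoly g i) v - v i * fluxPoly g i v) := by
    rw [pd_mul (hmaxw v) (hflux i v), pd_maxw]
    ring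
  simp only [QL, sum_integral_aMat_sub_mul_eq_maxw_mul_fluxPoly hg hg' hgd, hpd, ← Finset.mul_sum,
    sum_pd_fluxPoly_sub]

theorem landauPoly_eq_hermite (v : Fin d → ℝ) :
    landauPoly g v
      = 2 * ((d : ℝ) - 1) * ∑ j, moment1 g j * v j
        - ∑ i, ∑ j ∈ Finset.univ.filter (fun j => j ≠ i), moment2 g i j * (v i * v j)
        + ∑ i, ∑ j ∈ Finset.univ.filter (fun j => j ≠ i),
            (moment2 g i i - moment0 g) * (v j ^ 2 - 1) := by
  have hfilter (i : Fin d) (F : Fin d → ℝ) :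
      ∑ j ∈ Finset.univ.filter (fun j => j ≠ i), F j = ∑ j, F j - F i := by
    rw [Finset.filter_ne', Finset.sum_erase_eq_sub (Finset.mem_univ i)]
  have hcross (i : Fin d) :
      ∑ j, moment2 g i j * (v i * v j) = v i * ∑ k, v k * moment2 g i k := by
    rw [Finset.mul_sum]
    exact Finset.sum_congr rfl fun k _ => by ring
  have hdiag (i : Fin d) : ∑ j, (moment2 g i i - moment0 g) * (v j ^ 2 - 1)
      = (moment2 g i i - moment0 g) * (∑ k, v k ^ 2 - d) := by
    simp [← Finset.mul_sum, Finset.sum_sub_distrib]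
  have hlast : ∑ i, (moment2 g i i - moment0 g) * (v i ^ 2 - 1)
      = ∑ i, moment2 g i i * (v i * v i) - ∑ k, moment2 g k k - moment0 g * ∑ k, v k ^ 2
        + d * moment0 g := by
    simp only [mul_sub, sub_mul, Finset.sum_sub_distrib, ← Finset.mul_sum, Finset.sum_const,
      Finset.card_univ, Fintype.card_fin, nsmul_eq_mul, sq]
    ring_nf
  simp only [hfilter, hcross, hdiag, hlast, Finset.sum_sub_distrib, ← Finset.sum_mul, landauPoly,
    Finset.sum_const, Finset.card_univ, Fintype.card_fin, nsmul_eq_mul]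
  have hB : ∑ j, moment1 g j * v j = ∑ k, v k * moment1 g k :=
    Finset.sum_congr rfl fun k _ => mul_comm _ _
  rw [hB]
  ring

end Landau

section Hermite

variable {d : ℕ} (f : 𝓢(Fin d → ℝ, ℝ))

theorem differentiable_Psi0_mul : Differentiable ℝ (fun w => Psi0 d w * f w) :=
  (differentiable_Psi0 d).mul f.differentiable

theorem integrableAgainstTemperate_Psi0_mul :
    IntegrableAgainstTemperate (fun w => Psi0 d w * f w) volume :=
  f.integrableAgainstTemperate.bdd_mul (differentiable_Psi0 d).continuous.aestronglyMeasurable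
    fun w => (Real.norm_of_nonneg (Psi0_pos d w).le).trans_le (Psi0_le d w)

theorem integrableAgainstTemperate_pd_Psi0_mul (j : Fin d) :
    IntegrableAgainstTemperate (pd d j fun w => Psi0 d w * f w) volume := by
  have hpd : pd d j (fun w => Psi0 d w * f w)
      = fun w => Psi0 d w * (∂_{(Pi.single j 1 : Fin d → ℝ)} f : 𝓢(Fin d → ℝ, ℝ)) w
          + -2⁻¹ * w j * (Psi0 d w * f w) := by
    ext w
    rw [pd_mul (differentiable_Psi0 d w) f.differentiableAt, pd_Psi0,
      SchwartzMap.lineDerivOp_apply_eq_fderiv, pd]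
    ring
  rw [hpd]
  exact (integrableAgainstTemperate_Psi0_mul _).add
    ((integrableAgainstTemperate_Psi0_mul f).temperate_mul (by fun_prop))

theorem sum_integral_mul_PhiH_mul (v : Fin d → ℝ) :
    ∑ j, (∫ w, f w * PhiH d j w) * PhiH d j v
      = (∑ j, moment1 (fun w => Psi0 d w * f w) j * v j) * Psi0 d v := by
  have hm (j : Fin d) : ∫ w, f w * PhiH d j w = moment1 (fun w => Psi0 d w * f w) j := by
    unfold PhiH moment1; congr 1; ext w; ring
  rw [Finset.sum_mul]
  exact Finset.sum_congr rfl fun j _ => by rw [hm, PhiH]; ring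

theorem sum_integral_mul_PhiH2_mul (v : Fin d → ℝ) :
    ∑ i, ∑ j ∈ Finset.univ.filter (fun j => j ≠ i),
        (∫ w, f w * PhiH2 d i j w) * PhiH2 d i j v
      = (∑ i, ∑ j ∈ Finset.univ.filter (fun j => j ≠ i),
          moment2 (fun w => Psi0 d w * f w) i j * (v i * v j)) * Psi0 d v := by
  have hm (i j : Fin d) : ∫ w, f w * PhiH2 d i j w = moment2 (fun w => Psi0 d w * f w) i j := by
    unfold PhiH2 moment2; congr 1; ext w; ring
  simp only [Finset.sum_mul]
  exact Finset.sum_congr rfl fun i _ => Finset.sum_congr rfl fun j _ => by rw [hm, PhiH2]; ring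

theorem two_mul_sum_integral_mul_ThetaH_mul (v : Fin d → ℝ) :
    2 * ∑ i, ∑ j ∈ Finset.univ.filter (fun j => j ≠ i),
        (∫ w, f w * ThetaH d i w) * ThetaH d j v
      = (∑ i, ∑ j ∈ Finset.univ.filter (fun j => j ≠ i),
          (moment2 (fun w => Psi0 d w * f w) i i - moment0 (fun w => Psi0 d w * f w))
            * (v j ^ 2 - 1)) * Psi0 d v := by
  have hg := integrableAgainstTemperate_Psi0_mul f
  have hθ (i : Fin d) : ∫ w, f w * ThetaH d i w
      = (moment2 (fun w => Psi0 d w * f w) i i - moment0 (fun w => Psi0 d w * f w)) / √2 := by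
    have hexpand (w : Fin d → ℝ) : f w * ThetaH d i w
        = (w i * w i * (Psi0 d w * f w) - Psi0 d w * f w) / √2 := by
      unfold ThetaH; ring
    simp_rw [hexpand]
    rw [integral_div, integral_sub (hg _ (by fun_prop)) hg.integrable, moment2, moment0]
  simp only [Finset.mul_sum, Finset.sum_mul]
  refine Finset.sum_congr rfl fun i _ => Finset.sum_congr rfl fun j _ => ?_
  rw [hθ, ThetaH]
  field_simp
  rw [Real.sq_sqrt zero_le_two]
  ring

end Hermite

theorem L2L_finite_rank_general (d : ℕ)
    (f : SchwartzMap (Fin d → ℝ) ℝ) (v : Fin d → ℝ) :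
    -(Psi0 d v)⁻¹ * QL d (fun w => Psi0 d w * f w) (maxw d) v
      = -2 * ((d : ℝ) - 1) *
          (∑ j : Fin d, (∫ w : Fin d → ℝ, f w * PhiH d j w) * PhiH d j v)
        + (∑ i : Fin d, ∑ j ∈ Finset.univ.filter (fun j => j ≠ i),
            (∫ w : Fin d → ℝ, f w * PhiH2 d i j w) * PhiH2 d i j v)
        - 2 * (∑ i : Fin d, ∑ j ∈ Finset.univ.filter (fun j => j ≠ i),
            (∫ w : Fin d → ℝ, f w * ThetaH d i w) * ThetaH d j v) := by
  rw [QL_maxw (integrableAgainstTemperate_Psi0_mul f) (integrableAgainstTemperate_pd_Psi0_mul f)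
    (differentiable_Psi0_mul f), landauPoly_eq_hermite, maxw_eq_Psi0_mul_self,
    sum_integral_mul_PhiH_mul, sum_integral_mul_PhiH2_mul, two_mul_sum_integral_mul_ThetaH_mul]
  field_simp [(Psi0_pos d v).ne']
  ring

/-- The part `L_{2,L} f = −μ^{-1/2} Q_L(μ^{1/2} f, μ)` of the linearized Landau
operator is the finite-rank operator
`−2(d−1) Σ_j ⟨f,Φ_j⟩ Φ_j + Σ_{i≠j} ⟨f,Φ_{ij}⟩ Φ_{ij} − 2 Σ_{i≠j} ⟨f,Θ_i⟩ Θ_j`. -/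
theorem L2L_finite_rank (d : ℕ) (hd : 2 ≤ d)
    (f : SchwartzMap (Fin d → ℝ) ℝ) (v : Fin d → ℝ) :
    -(Psi0 d v)⁻¹ * QL d (fun w => Psi0 d w * f w) (maxw d) v
      = -2 * ((d : ℝ) - 1) *
          (∑ j : Fin d, (∫ w : Fin d → ℝ, f w * PhiH d j w) * PhiH d j v)
        + (∑ i : Fin d, ∑ j ∈ Finset.univ.filter (fun j => j ≠ i),
            (∫ w : Fin d → ℝ, f w * PhiH2 d i j w) * PhiH2 d i j v)
        - 2 * (∑ i : Fin d, ∑ j ∈ Finset.univ.filter (fun j => j ≠ i),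
            (∫ w : Fin d → ℝ, f w * ThetaH d i w) * ThetaH d j v) :=
  L2L_finite_rank_general d f v
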